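/- arXiv:1301.2809 — 2 statements merged into one kernel-verified Lean document; each statement's English description precedes it below -/
import Mathlib

section
/- Let X be a compact metric space, and let P₁, Q₁ be open sets with disjoint closures, and W̃ an open set such that both closure(P₁) \ W̃ and closure(Q₁) \ W̃ are non-empty and W̃ contains no partition of X between closure(P₁) and closure(Q₁). Then there exists a continuum K ⊂ X \ W̃ joining closure(P₁) and closure(Q₁). -/
open Set Function Topology

/-- `C` is a partition of the ambient space between `A` and `B`. -/
def IsPartitionBetween {X : Type*} [TopologicalSpace X] (C A B : Set X) : Prop :=
  IsClosed C ∧ ∃ U V : Set X, IsOpen U ∧ IsOpen V ∧ A ⊆ U ∧ B ⊆ V ∧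
    Disjoint U V ∧ Cᶜ = U ∪ V

/-!
Put `Y = X \ W̃`. If no connected component of `Y` met both `closure P₁` and `closure Q₁`, then,
since components of a compact Hausdorff space are intersections of clopen sets, compactness
would give a clopen `F ⊆ Y` containing `Y ∩ closure P₁` and missing `closure Q₁`. Then
`closure P₁ ∪ F` and `closure Q₁ ∪ (Y \ F)` are disjoint closed sets covering `Y`, and the
complement of two disjoint open neighbourhoods of them is a partition lying in `W̃`.
So some component of `Y` is the required continuum.
-/

section Clopen

variable {Y : Type*} [TopologicalSpace Y]

theorem IsCompact.exists_isClopen_of_forall_mem {A B : Set Y} (hA : IsCompact A)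
    (h : ∀ a ∈ A, ∃ F, IsClopen F ∧ a ∈ F ∧ Disjoint F B) :
    ∃ F, IsClopen F ∧ A ⊆ F ∧ Disjoint F B := by
  choose! F hF haF hFB using h
  obtain ⟨t, htA, hAt⟩ :=
    hA.elim_nhds_subcover F fun a ha => (hF a ha).isOpen.mem_nhds (haF a ha)
  exact ⟨⋃ a ∈ t, F a, isClopen_biUnion_finset fun a ha => hF a (htA a ha), hAt,
    disjoint_iUnion₂_left.2 fun a ha => hFB a (htA a ha)⟩

variable [T2Space Y] [CompactSpace Y]

theorem exists_isClopen_of_disjoint_connectedComponent {x : Y} {B : Set Y} (hB : IsClosed B)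
    (h : Disjoint (connectedComponent x) B) :
    ∃ F, IsClopen F ∧ x ∈ F ∧ Disjoint F B := by
  have hsep : ∀ b ∈ B, ∃ G, IsClopen G ∧ b ∈ G ∧ Disjoint G {x} := by
    intro b hb
    have hbx : b ∉ ⋂ s : { s : Set Y // IsClopen s ∧ x ∈ s }, s := by
      rw [← connectedComponent_eq_iInter_isClopen]
      exact disjoint_right.1 h hb
    obtain ⟨⟨s, hs, hxs⟩, hbs⟩ := by simpa only [mem_iInter, not_forall] using hbx
    exact ⟨sᶜ, hs.compl, hbs, disjoint_singleton_right.2 (not_not.2 hxs)⟩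
  obtain ⟨G, hG, hBG, hGx⟩ := hB.isCompact.exists_isClopen_of_forall_mem hsep
  exact ⟨Gᶜ, hG.compl, disjoint_singleton_right.1 hGx, disjoint_compl_left.mono_right hBG⟩

theorem exists_isClopen_of_forall_disjoint_connectedComponent {A B : Set Y} (hA : IsClosed A)
    (hB : IsClosed B) (h : ∀ a ∈ A, Disjoint (connectedComponent a) B) :
    ∃ F, IsClopen F ∧ A ⊆ F ∧ Disjoint F B :=
  hA.isCompact.exists_isClopen_of_forall_mem fun a ha =>
    exists_isClopen_of_disjoint_connectedComponent hB (h a ha)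

end Clopen

section Partition

variable {X : Type*} [TopologicalSpace X]

theorem IsPartitionBetween.mono {C A B A' B' : Set X} (h : IsPartitionBetween C A B)
    (hA : A' ⊆ A) (hB : B' ⊆ B) : IsPartitionBetween C A' B' := by
  obtain ⟨hC, U, V, hU, hV, hAU, hBV, hUV, hCUV⟩ := h
  exact ⟨hC, U, V, hU, hV, hA.trans hAU, hB.trans hBV, hUV, hCUV⟩

variable [NormalSpace X]

theorem exists_isPartitionBetween_subset {A B W : Set X} (hA : IsClosed A) (hB : IsClosed B)
    (hAB : Disjoint A B) (hW : Wᶜ ⊆ A ∪ B) : ∃ C ⊆ W, IsPartitionBetween C A B := by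
  obtain ⟨U, V, hU, hV, hAU, hBV, hUV⟩ := normal_separation hA hB hAB
  refine ⟨(U ∪ V)ᶜ, ?_, (hU.union hV).isClosed_compl, U, V, hU, hV, hAU, hBV, hUV,
    compl_compl _⟩
  exact compl_subset_comm.1 (hW.trans (union_subset_union hAU hBV))

theorem exists_isPartitionBetween_subset_of_isClopen {A B W : Set X} (hA : IsClosed A)
    (hB : IsClosed B) (hAB : Disjoint A B) (hW : IsOpen W) {F : Set ↥Wᶜ} (hF : IsClopen F)
    (hAF : (↑) ⁻¹' A ⊆ F) (hFB : Disjoint F ((↑) ⁻¹' B)) :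
    ∃ C ⊆ W, IsPartitionBetween C A B := by
  have hval : IsClosedEmbedding (Subtype.val : ↥Wᶜ → X) :=
    hW.isClosed_compl.isClosedEmbedding_subtypeVal
  have hdisj : Disjoint (A ∪ (↑) '' F) (B ∪ (↑) '' Fᶜ) := by
    rw [disjoint_left]
    rintro _ (hxA | ⟨y, hyF, rfl⟩) (hxB | ⟨z, hzF, hzx⟩)
    · exact disjoint_left.1 hAB hxA hxB
    · exact hzF (hAF (show (z : X) ∈ A from hzx ▸ hxA))
    · exact disjoint_left.1 hFB hyF hxB
    · exact hzF (Subtype.val_injective hzx ▸ hyF)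
  have hcover : Wᶜ ⊆ (A ∪ (↑) '' F) ∪ (B ∪ (↑) '' Fᶜ) := by
    intro x hx
    by_cases hxF : (⟨x, hx⟩ : ↥Wᶜ) ∈ F
    · exact Or.inl (Or.inr ⟨_, hxF, rfl⟩)
    · exact Or.inr (Or.inr ⟨_, hxF, rfl⟩)
  obtain ⟨C, hCW, hC⟩ := exists_isPartitionBetween_subset
    (hA.union (hval.isClosedMap _ hF.isClosed)) (hB.union (hval.isClosedMap _ hF.compl.isClosed))
    hdisj hcover
  exact ⟨C, hCW, hC.mono subset_union_left subset_union_left⟩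

end Partition

theorem statement16_general (X : Type) [MetricSpace X] [CompactSpace X]
    (P₁ Q₁ W : Set X)
    (hPQ : Disjoint (closure P₁) (closure Q₁)) (hW : IsOpen W)
    (hnopart : ¬ ∃ C : Set X, C ⊆ W ∧ IsPartitionBetween C (closure P₁) (closure Q₁)) :
    ∃ K : Set X, K ⊆ Wᶜ ∧ IsCompact K ∧ IsConnected K ∧
      (K ∩ closure P₁).Nonempty ∧ (K ∩ closure Q₁).Nonempty := by
  have : CompactSpace ↥Wᶜ := isCompact_iff_compactSpace.mp hW.isClosed_compl.isCompact
  obtain ⟨a, haP, b, hba, hbQ⟩ : ∃ a : ↥Wᶜ, (a : X) ∈ closure P₁ ∧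
      ∃ b ∈ connectedComponent a, (b : X) ∈ closure Q₁ := by
    by_contra! h
    obtain ⟨F, hF, hPF, hFQ⟩ := exists_isClopen_of_forall_disjoint_connectedComponent
      (isClosed_closure.preimage continuous_subtype_val)
      (isClosed_closure.preimage continuous_subtype_val)
      fun a ha => disjoint_left.2 fun b hb => h a ha b hb
    exact hnopart (exists_isPartitionBetween_subset_of_isClopen isClosed_closure
      isClosed_closure hPQ hW hF hPF hFQ)
  exact ⟨(↑) '' connectedComponent a, Subtype.coe_image_subset _ _,
    isClosed_connectedComponent.isCompact.image continuous_subtype_val,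
    isConnected_connectedComponent.image _ continuous_subtype_val.continuousOn,
    ⟨a, mem_image_of_mem _ mem_connectedComponent, haP⟩, ⟨b, mem_image_of_mem _ hba, hbQ⟩⟩

/-- If `W̃` is an open subset of a compact metric space containing no partition between
`closure P₁` and `closure Q₁`, and both `closure P₁ \ W̃` and `closure Q₁ \ W̃` are
non-empty, then there is a continuum `K ⊆ X \ W̃` joining `closure P₁` and `closure Q₁`. -/
theorem statement16 (X : Type) [MetricSpace X] [CompactSpace X]
    (P₁ Q₁ W : Set X) (hP : IsOpen P₁) (hQ : IsOpen Q₁)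
    (hPQ : Disjoint (closure P₁) (closure Q₁)) (hW : IsOpen W)
    (hPne : (closure P₁ \ W).Nonempty) (hQne : (closure Q₁ \ W).Nonempty)
    (hnopart : ¬ ∃ C : Set X, C ⊆ W ∧ IsPartitionBetween C (closure P₁) (closure Q₁)) :
    ∃ K : Set X, K ⊆ Wᶜ ∧ IsCompact K ∧ IsConnected K ∧
      (K ∩ closure P₁).Nonempty ∧ (K ∩ closure Q₁).Nonempty :=
  statement16_general X P₁ Q₁ W hPQ hW hnopart
end

section
/- Let X be a complete metric space and {M_i : i = 1,2,…} a countable family of closed subsets of X each of which is a Z₁-set in X. If open sets P, Q ⊂ X can be joined by a path in X, then they can be joined by a path in X \ ∪M_i. -/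
/-
The paths missing a closed `Z₁`-set form an open dense subset of the complete metric space
`C(I, X)` of paths with the uniform metric: openness because `I` is compact, density because
an approximation subordinate to the cover by `ε/2`-balls is `ε`-close. By Baire's theorem the
paths missing every `Mᵢ` are dense, so one of them lies in the nonempty open set of paths
starting in `P` and ending in `Q`.
-/

open Set Function Topology

/-- `A` is a `Z₁`-set in `X`: every path in `X` can be approximated, with respect to any
open cover, by paths missing `A`. -/
def IsZ1Set {X : Type*} [TopologicalSpace X] (A : Set X) : Prop :=
  IsClosed A ∧ ∀ f : C(↥unitInterval, X), ∀ ω : Set (Set X),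
    (∀ U ∈ ω, IsOpen U) → ⋃₀ ω = Set.univ →
      ∃ g : C(↥unitInterval, X), Set.range g ⊆ Aᶜ ∧
        ∀ t : ↥unitInterval, ∃ U ∈ ω, f t ∈ U ∧ g t ∈ U

theorem ContinuousMap.isOpen_setOf_range_subset_compl {α X : Type*} [TopologicalSpace α]
    [CompactSpace α] [TopologicalSpace X] {A : Set X} (hA : IsClosed A) :
    IsOpen {g : C(α, X) | range g ⊆ Aᶜ} := by
  simpa only [← mapsTo_univ_iff_range_subset] using
    ContinuousMap.isOpen_setOfPred_mapsTo isCompact_univ hA.isOpen_compl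

namespace IsZ1Set

variable {X : Type*} [MetricSpace X] {A : Set X}

theorem exists_dist_lt (hA : IsZ1Set A) (f : C(unitInterval, X)) {ε : ℝ} (hε : 0 < ε) :
    ∃ g : C(unitInterval, X), range g ⊆ Aᶜ ∧ dist g f < ε := by
  obtain ⟨g, hgA, hclose⟩ := hA.2 f (range fun x => Metric.ball x (ε / 2))
    (by rintro _ ⟨x, rfl⟩; exact Metric.isOpen_ball)
    (sUnion_range _ ▸ eq_univ_of_forall fun x =>
      mem_iUnion.2 ⟨x, Metric.mem_ball_self (by positivity)⟩)
  refine ⟨g, hgA, (ContinuousMap.dist_lt_iff hε).2 fun t => ?_⟩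
  obtain ⟨_, ⟨x, rfl⟩, hft, hgt⟩ := hclose t
  calc dist (g t) (f t) ≤ dist (g t) x + dist (f t) x := dist_triangle_right _ _ _
    _ < ε / 2 + ε / 2 := add_lt_add hgt hft
    _ = ε := add_halves ε

theorem dense_setOf_range_subset_compl (hA : IsZ1Set A) :
    Dense {g : C(unitInterval, X) | range g ⊆ Aᶜ} :=
  Metric.dense_iff.2 fun f _ hε =>
    let ⟨g, hgA, hgf⟩ := hA.exists_dist_lt f hε
    ⟨g, hgf, hgA⟩

end IsZ1Set

theorem dense_setOf_range_subset_compl_iUnion {X : Type*} [MetricSpace X] [CompleteSpace X]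
    {M : ℕ → Set X} (hM : ∀ i, IsZ1Set (M i)) :
    Dense {g : C(unitInterval, X) | range g ⊆ (⋃ i, M i)ᶜ} := by
  have hBaire : Dense (⋂ i, {g : C(unitInterval, X) | range g ⊆ (M i)ᶜ}) :=
    dense_iInter_of_isOpen (fun i => ContinuousMap.isOpen_setOf_range_subset_compl (hM i).1)
      fun i => (hM i).dense_setOf_range_subset_compl
  simpa only [compl_iUnion, subset_iInter_iff, ofPred_forall] using hBaire

/-- If each member of a countable family of closed `Z₁`-sets is removed from a complete
metric space, paths joining two open sets `P` and `Q` persist: if `P` and `Q` can be joined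
by a path in `X`, they can be joined by a path in `X \ ⋃ Mᵢ`. -/
theorem statement18 (X : Type) [MetricSpace X] [CompleteSpace X]
    (M : ℕ → Set X) (hM : ∀ i, IsZ1Set (M i))
    (P Q : Set X) (hP : IsOpen P) (hQ : IsOpen Q)
    (hpath : ∃ f : C(↥unitInterval, X), f 0 ∈ P ∧ f 1 ∈ Q) :
    ∃ g : C(↥unitInterval, X), g 0 ∈ P ∧ g 1 ∈ Q ∧
      Set.range g ⊆ (⋃ i, M i)ᶜ := by
  have hjoin : IsOpen {g : C(unitInterval, X) | g 0 ∈ P ∧ g 1 ∈ Q} :=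
    (hP.preimage (continuous_eval_const 0)).inter (hQ.preimage (continuous_eval_const 1))
  obtain ⟨g, hgM, hg0, hg1⟩ :=
    (dense_setOf_range_subset_compl_iUnion hM).exists_mem_open hjoin hpath
  exact ⟨g, hg0, hg1, hgM⟩
end
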